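/- arXiv:0809.1531 — 2 statements merged into one kernel-verified Lean document; each statement's English description precedes it below -/
import Mathlib

section
/- Let H and H_f be self-adjoint operators on a Hilbert space with H_f ≥ 0, and set R = (H+i)^{-1}. Suppose that for each l ≥ 0 the iterated commutator W_l := ad_{H_f}^l(H) (defined as a quadratic form on a suitable common core, with W_0 interpreted via [H_f, R] = −R W_1 R and [H_f, W_j] = W_{j+1}) is such that W_l R is a bounded operator for all l ≥ 1. Then for every l ∈ ℕ, ad_{H_f}^l(R) is a bounded operator, and moreover ad_{H_f}^l(R) = Σ c_{j_1,…,j_k} R W_{j_1} R ⋯ W_{j_k} R, a finite sum over 1 ≤ k ≤ l and j_1,…,j_m ≥ 1 with j_1 + … + j_k = l, with integer combinatorial coefficients. -/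
/-- `adPow h n x` is the `n`-fold commutator `ad_h^n(x) = [h,[h,…,[h,x]…]]`. -/
def adPow {A : Type*} [Ring A] (h : A) : ℕ → A → A
  | 0, x => x
  | n + 1, x => h * adPow h n x - adPow h n x * h

/-- The word `r w_{j₁} r w_{j₂} r ⋯ w_{j_k} r` associated with a list `[j₁,…,j_k]`. -/
def commWord {A : Type*} [Ring A] (r : A) (w : ℕ → A) (L : List ℕ) : A :=
  r * (L.map (fun j => w j * r)).prod

/-!
`ad_h` is a derivation, so applying it to a word `r w_{j₁} r ⋯ w_{j_k} r` hits one letter at a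
time: on an `r` it inserts a new letter `w₁` (with a sign), on a `w_j` it raises the index to
`j + 1`. Either way the index sum grows by one, so by induction `ad_h^l(r)` lies in the additive
span of the words of index sum `l`.
-/

lemma lie_mul_eq_lie_mul_add_mul_lie {A : Type*} [Ring A] (a x y : A) :
    ⁅a, x * y⁆ = ⁅a, x⁆ * y + x * ⁅a, y⁆ := by
  simp only [Ring.lie_def]; noncomm_ring

lemma commWord_nil {A : Type*} [Ring A] (r : A) (w : ℕ → A) : commWord r w [] = r := by
  simp [commWord]

lemma commWord_cons {A : Type*} [Ring A] (r : A) (w : ℕ → A) (j : ℕ) (L : List ℕ) :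
    commWord r w (j :: L) = r * w j * commWord r w L := by
  simp [commWord, mul_assoc]

def wordSpan {A : Type*} [Ring A] (r : A) (w : ℕ → A) (n : ℕ) : AddSubgroup A :=
  AddSubgroup.closure {x | ∃ L : List ℕ, (∀ j ∈ L, 1 ≤ j) ∧ L.sum = n ∧ x = commWord r w L}

section wordSpan

variable {A : Type*} [Ring A] {r : A} {w : ℕ → A}

lemma commWord_mem_wordSpan {L : List ℕ} (hL : ∀ j ∈ L, 1 ≤ j) :
    commWord r w L ∈ wordSpan r w L.sum :=
  AddSubgroup.subset_closure ⟨L, hL, rfl, rfl⟩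

lemma mul_mem_wordSpan {j n : ℕ} (hj : 1 ≤ j) {x : A} (hx : x ∈ wordSpan r w n) :
    r * w j * x ∈ wordSpan r w (j + n) := by
  have : wordSpan r w n ≤ (wordSpan r w (j + n)).comap (AddMonoidHom.mulLeft (r * w j)) := by
    refine (AddSubgroup.closure_le _).2 ?_
    rintro _ ⟨L, hL, rfl, rfl⟩
    have hjL : ∀ i ∈ j :: L, 1 ≤ i := by simpa [hj] using hL
    simpa [commWord_cons] using commWord_mem_wordSpan (w := w) hjL
  exact this hx

lemma wordSpan_le_closure {l : ℕ} (hl : 1 ≤ l) :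
    wordSpan r w l ≤ AddSubgroup.closure
      {x : A | ∃ L : List ℕ, L ≠ [] ∧ L.length ≤ l ∧ (∀ j ∈ L, 1 ≤ j) ∧
        L.sum = l ∧ x = commWord r w L} := by
  refine AddSubgroup.closure_mono ?_
  rintro _ ⟨L, hL, rfl, rfl⟩
  refine ⟨L, ?_, L.length_le_sum_of_one_le hL, hL, rfl, rfl⟩
  rintro rfl
  simp at hl

variable (h : A) (hr : ⁅h, r⁆ = -(r * w 1 * r)) (hw : ∀ j, 1 ≤ j → ⁅h, w j⁆ = w (j + 1))
include hr hw

lemma lie_commWord_mem_wordSpan {L : List ℕ} (hL : ∀ j ∈ L, 1 ≤ j) :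
    ⁅h, commWord r w L⁆ ∈ wordSpan r w (L.sum + 1) := by
  induction L with
  | nil =>
    have hword : r * w 1 * r = commWord r w [1] := by rw [commWord_cons, commWord_nil]
    rw [commWord_nil, hr, hword]
    exact neg_mem (commWord_mem_wordSpan (L := [1]) (by simp))
  | cons j L ih =>
    obtain ⟨hj, hL⟩ : 1 ≤ j ∧ ∀ i ∈ L, 1 ≤ i := by simpa using hL
    have hC := commWord_mem_wordSpan (r := r) (w := w) hL
    have hexpand : ⁅h, commWord r w (j :: L)⁆ =
        -(r * w 1 * (r * w j * commWord r w L)) + r * w (j + 1) * commWord r w L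
          + r * w j * ⁅h, commWord r w L⁆ := by
      rw [commWord_cons, lie_mul_eq_lie_mul_add_mul_lie, lie_mul_eq_lie_mul_add_mul_lie, hr,
        hw j hj]
      noncomm_ring
    rw [hexpand, List.sum_cons]
    refine add_mem (add_mem (neg_mem ?_) ?_) ?_
    · simpa [add_comm, add_left_comm] using mul_mem_wordSpan le_rfl (mul_mem_wordSpan hj hC)
    · simpa [add_right_comm] using mul_mem_wordSpan (Nat.le_add_left 1 j) hC
    · simpa [add_assoc] using mul_mem_wordSpan hj (ih hL)

lemma lie_mem_wordSpan {n : ℕ} {x : A} (hx : x ∈ wordSpan r w n) :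
    ⁅h, x⁆ ∈ wordSpan r w (n + 1) := by
  -- `⁅h, ·⁆` is definitionally the additive map `mulLeft h - mulRight h`.
  have : wordSpan r w n ≤
      (wordSpan r w (n + 1)).comap (AddMonoidHom.mulLeft h - AddMonoidHom.mulRight h) := by
    refine (AddSubgroup.closure_le _).2 ?_
    rintro _ ⟨L, hL, rfl, rfl⟩
    exact lie_commWord_mem_wordSpan h hr hw hL
  exact this hx

lemma adPow_mem_wordSpan (l : ℕ) : adPow h l r ∈ wordSpan r w l := by
  induction l with
  | zero =>
    simpa [adPow, commWord_nil] using
      commWord_mem_wordSpan (r := r) (w := w) (L := []) (by simp)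
  | succ l ih => exact lie_mem_wordSpan h hr hw ih

end wordSpan

theorem ad_resolvent_expansion
    {A : Type*} [Ring A] (h r : A) (w : ℕ → A)
    (hr : h * r - r * h = -(r * w 1 * r))
    (hw : ∀ j : ℕ, 1 ≤ j → h * w j - w j * h = w (j + 1)) :
    ∀ l : ℕ, 1 ≤ l →
      adPow h l r ∈ AddSubgroup.closure
        {x : A | ∃ L : List ℕ, L ≠ [] ∧ L.length ≤ l ∧ (∀ j ∈ L, 1 ≤ j) ∧
          L.sum = l ∧ x = commWord r w L} := by
  intro l hl
  exact wordSpan_le_closure hl (adPow_mem_wordSpan h hr hw l)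
end

section
/- Let ℋ be a Hilbert space, H self-adjoint on ℋ, E ∈ ℝ, P = 1_{(-∞,E]}(H), and let T be a bounded operator on Ran P (extended by its definition on Ran P) satisfying the intertwining relation e^{-itH} T e^{itH} = T_t on Ran P for a family of operators T_t, for all t ∈ ℝ. Suppose moreover that for all Φ ∈ D(H) and Ψ ∈ Ran P the function t ↦ ⟨Φ, T_t Ψ⟩ is differentiable at 0 with derivative ⟨Φ, S Ψ⟩ for some operator S bounded on Ran P. Then for every Ψ ∈ Ran P, T Ψ ∈ D(H) and i H T Ψ − T (i H Ψ) = −S Ψ. -/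
/-!
Since `U t` is unitary, `⟪Φ, T_t Ψ⟫ = ⟪U t Φ, T (U t Ψ)⟫`, and differentiating at `t = 0` gives
`⟪i H Φ, T Ψ⟫ = ⟪Φ, S Ψ - T (i H Ψ)⟫` for every `Φ ∈ D(H)`. This says that `T Ψ` lies in the
domain of `(i H)* = -i H`, i.e. of `H` by self-adjointness, with `i H (T Ψ) = -(S Ψ - T (i H Ψ))`.
-/

open scoped InnerProductSpace

section SelfAdjoint

open LinearPMap

variable {𝕜 E : Type*} [RCLike 𝕜] [NormedAddCommGroup E] [InnerProductSpace 𝕜 E] [CompleteSpace E]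
  {A : E →ₗ.[𝕜] E}

theorem IsSelfAdjoint.exists_mem_domain_apply_eq (hA : IsSelfAdjoint A) {x w : E}
    (h : ∀ y : A.domain, ⟪w, (y : E)⟫_𝕜 = ⟪x, A y⟫_𝕜) : ∃ hx : x ∈ A.domain, A ⟨x, hx⟩ = w := by
  rw [← isSelfAdjoint_def.mp hA]
  exact ⟨mem_adjoint_domain_of_exists x ⟨w, h⟩, adjoint_apply_eq hA.dense_domain _ h⟩

end SelfAdjoint

section SkewAdjoint

variable {E : Type*} [NormedAddCommGroup E] [InnerProductSpace ℂ E] [CompleteSpace E]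
  {A : E →ₗ.[ℂ] E}

/-- Weak form of `(i A)* = -i A` for a self-adjoint `A`. -/
theorem IsSelfAdjoint.exists_mem_domain_I_smul_apply_eq (hA : IsSelfAdjoint A) {x v : E}
    (h : ∀ y : A.domain, ⟪Complex.I • A y, x⟫_ℂ = ⟪(y : E), v⟫_ℂ) :
    ∃ hx : x ∈ A.domain, Complex.I • A ⟨x, hx⟩ = -v := by
  have hweak : ∀ y : A.domain, ⟪Complex.I • v, (y : E)⟫_ℂ = ⟪x, A y⟫_ℂ := fun y => by
    have hy := h y
    rw [inner_smul_left, Complex.conj_I] at hy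
    rw [inner_smul_left, Complex.conj_I, ← inner_conj_symm x, ← inner_conj_symm v, ← hy]
    simp [Complex.conj_I, ← mul_assoc]
  obtain ⟨hx, hAx⟩ := hA.exists_mem_domain_apply_eq hweak
  exact ⟨hx, by rw [hAx, smul_smul, Complex.I_mul_I, neg_one_smul]⟩

end SkewAdjoint

section IsometryGroup

variable {E : Type*} [NormedAddCommGroup E] [InnerProductSpace ℂ E] {U : ℝ → E →L[ℂ] E}

theorem inner_apply_eq_inner_apply_neg (hU0 : U 0 = ContinuousLinearMap.id ℂ E)
    (hUgroup : ∀ s t : ℝ, U (s + t) = (U s).comp (U t)) (hUiso : ∀ (t : ℝ) (x : E), ‖U t x‖ = ‖x‖)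
    (t : ℝ) (x y : E) : ⟪U t x, y⟫_ℂ = ⟪x, U (-t) y⟫_ℂ := by
  have hinv : U t (U (-t) y) = y := by
    simpa [hU0] using congrArg (fun A : E →L[ℂ] E => A y) (hUgroup t (-t)).symm
  conv_lhs => rw [← hinv]
  exact LinearIsometry.inner_map_map ⟨(U t).toLinearMap, hUiso t⟩ x _

theorem hasDerivAt_inner_conj_apply (hU0 : U 0 = ContinuousLinearMap.id ℂ E)
    (hUgroup : ∀ s t : ℝ, U (s + t) = (U s).comp (U t)) (hUiso : ∀ (t : ℝ) (x : E), ‖U t x‖ = ‖x‖)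
    (T : E →L[ℂ] E) {x y x' y' : E} (hx : HasDerivAt (fun t => U t x) x' 0)
    (hy : HasDerivAt (fun t => U t y) y' 0) :
    HasDerivAt (fun t => ⟪x, U (-t) (T (U t y))⟫_ℂ) (⟪x, T y'⟫_ℂ + ⟪x', T y⟫_ℂ) 0 := by
  have hTy : HasDerivAt (fun t => T (U t y)) (T y') 0 :=
    (T.restrictScalars ℝ).hasFDerivAt.comp_hasDerivAt 0 hy
  simpa [← inner_apply_eq_inner_apply_neg hU0 hUgroup hUiso, hU0] using hx.inner ℂ hTy

end IsometryGroup

theorem asymptotic_commutator_identity_general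
    {ℋ : Type*} [NormedAddCommGroup ℋ] [InnerProductSpace ℂ ℋ] [CompleteSpace ℋ]
    (H : ℋ →ₗ.[ℂ] ℋ) (hH : IsSelfAdjoint H)
    (U : ℝ → ℋ →L[ℂ] ℋ)
    (hU0 : U 0 = ContinuousLinearMap.id ℂ ℋ)
    (hUgroup : ∀ s t : ℝ, U (s + t) = (U s).comp (U t))
    (hUiso : ∀ (t : ℝ) (x : ℋ), ‖U t x‖ = ‖x‖)
    (hUgen : ∀ Φ : H.domain, HasDerivAt (fun t : ℝ => U t (Φ : ℋ)) (Complex.I • H Φ) 0)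
    (P : ℋ →L[ℂ] ℋ)
    (hPdom : ∀ x : ℋ, P x = x → x ∈ H.domain)
    (T S : ℋ →L[ℂ] ℋ) (Tt : ℝ → ℋ → ℋ)
    (hinter : ∀ (t : ℝ) (Ψ : ℋ), P Ψ = Ψ → U (-t) (T (U t Ψ)) = Tt t Ψ)
    (hderiv : ∀ (Φ : H.domain) (Ψ : ℋ), P Ψ = Ψ →
      HasDerivAt (fun t : ℝ => ⟪(Φ : ℋ), Tt t Ψ⟫_ℂ) ⟪(Φ : ℋ), S Ψ⟫_ℂ 0) :
    ∀ Ψ : ℋ, ∀ hΨ : P Ψ = Ψ, ∃ hmem : T Ψ ∈ H.domain,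
      Complex.I • H ⟨T Ψ, hmem⟩ - T (Complex.I • H ⟨Ψ, hPdom Ψ hΨ⟩) = -(S Ψ) := by
  intro Ψ hΨ
  have hweak : ∀ Φ : H.domain,
      ⟪Complex.I • H Φ, T Ψ⟫_ℂ = ⟪(Φ : ℋ), S Ψ - T (Complex.I • H ⟨Ψ, hPdom Ψ hΨ⟩)⟫_ℂ := by
    intro Φ
    have hconj := hasDerivAt_inner_conj_apply hU0 hUgroup hUiso T (hUgen Φ) (hUgen ⟨Ψ, hPdom Ψ hΨ⟩)
    simp only [hinter _ _ hΨ] at hconj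
    rw [inner_sub_right, (hderiv Φ Ψ hΨ).unique hconj]
    ring
  obtain ⟨hmem, hHTΨ⟩ := hH.exists_mem_domain_I_smul_apply_eq hweak
  exact ⟨hmem, by rw [hHTΨ]; abel⟩

theorem asymptotic_commutator_identity
    {ℋ : Type*} [NormedAddCommGroup ℋ] [InnerProductSpace ℂ ℋ] [CompleteSpace ℋ]
    (H : ℋ →ₗ.[ℂ] ℋ) (hH : IsSelfAdjoint H)
    (U : ℝ → ℋ →L[ℂ] ℋ)
    (hU0 : U 0 = ContinuousLinearMap.id ℂ ℋ)
    (hUgroup : ∀ s t : ℝ, U (s + t) = (U s).comp (U t))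
    (hUiso : ∀ (t : ℝ) (x : ℋ), ‖U t x‖ = ‖x‖)
    (hUgen : ∀ Φ : H.domain, HasDerivAt (fun t : ℝ => U t (Φ : ℋ)) (Complex.I • H Φ) 0)
    (P : ℋ →L[ℂ] ℋ)
    (hPU : ∀ t : ℝ, (U t).comp P = P.comp (U t))
    (hPdom : ∀ x : ℋ, P x = x → x ∈ H.domain)
    (T S : ℋ →L[ℂ] ℋ) (Tt : ℝ → ℋ → ℋ)
    (hinter : ∀ (t : ℝ) (Ψ : ℋ), P Ψ = Ψ → U (-t) (T (U t Ψ)) = Tt t Ψ)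
    (hderiv : ∀ (Φ : H.domain) (Ψ : ℋ), P Ψ = Ψ →
      HasDerivAt (fun t : ℝ => ⟪(Φ : ℋ), Tt t Ψ⟫_ℂ) ⟪(Φ : ℋ), S Ψ⟫_ℂ 0) :
    ∀ Ψ : ℋ, ∀ hΨ : P Ψ = Ψ, ∃ hmem : T Ψ ∈ H.domain,
      Complex.I • H ⟨T Ψ, hmem⟩ - T (Complex.I • H ⟨Ψ, hPdom Ψ hΨ⟩) = -(S Ψ) :=
  asymptotic_commutator_identity_general H hH U hU0 hUgroup hUiso hUgen P hPdom T S Tt hinter hderiv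
end
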